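/- Let D = (P,𝓑) be a symmetric 2-(v,k,λ) design with λ > 1 and let G be a flag-transitive automorphism group of D. If for a block B the setwise stabilizer G_B is isomorphic to the dihedral group D_{2n} with n ≥ 3, then λ is even. -/

import Mathlib

open scoped Pointwise

/-- A group action is primitive if it is transitive and every block is trivial
(this is the usual notion of a primitive permutation group). -/
def IsPrimitiveAction (G X : Type*) [Group G] [MulAction G X] : Prop :=
  MulAction.IsPretransitive G X ∧
    ∀ B : Set X, MulAction.IsBlock G B → B.Subsingleton ∨ B = Set.univ

variable {P : Type*} [Fintype P] [DecidableEq P]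

/-- `𝓑` is the block set of a (non-trivial) 2-design with parameters `(v, k, lam)`
on the point set `P`. -/
structure IsDesign (𝓑 : Finset (Finset P)) (v k lam : ℕ) : Prop where
  card_points : Fintype.card P = v
  blocks_card : ∀ B ∈ 𝓑, B.card = k
  two_lt_k : 2 < k
  k_lt_v : k < v - 1
  lam_pos : 0 < lam
  pair_blocks : ∀ x y : P, x ≠ y → (𝓑.filter fun B => x ∈ B ∧ y ∈ B).card = lam

/-- `G` is an automorphism group of the design with block set `𝓑`:
every element of `G` maps blocks to blocks. -/
def IsAutGroup (G : Subgroup (Equiv.Perm P)) (𝓑 : Finset (Finset P)) : Prop :=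
  ∀ g ∈ G, ∀ B ∈ 𝓑, g • B ∈ 𝓑

/-- `G` acts transitively on the flags of the design with block set `𝓑`. -/
def IsFlagTransitive (G : Subgroup (Equiv.Perm P)) (𝓑 : Finset (Finset P)) : Prop :=
  ∀ B₁ ∈ 𝓑, ∀ B₂ ∈ 𝓑, ∀ x₁ ∈ B₁, ∀ x₂ ∈ B₂, ∃ g ∈ G, g • x₁ = x₂ ∧ g • B₁ = B₂

/-- `G` acts transitively on the blocks of the design with block set `𝓑`. -/
def IsBlockTransitive (G : Subgroup (Equiv.Perm P)) (𝓑 : Finset (Finset P)) : Prop :=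
  ∀ B₁ ∈ 𝓑, ∀ B₂ ∈ 𝓑, ∃ g ∈ G, g • B₁ = B₂

/-!
Suppose `λ` is odd. An involution of `G` preserving a set of odd size fixes a point of it; applied
to the `λ` blocks through a preserved pair of points and to the `λ` points common to two preserved
or swapped blocks, this shows that every involution `τ ∈ G` fixes a point of every block and has
at least two fixed points.

Inside a block stabiliser `G_C ≅ D_{2n}`, which is transitive on `C`, every reflection thus fixes
a point of `C`, so the point stabiliser contains a rotation by an odd amount; consequently a
reflection fixes at most one point of `C`. The other involutions of `D_{2n}` are central, so they
fix `C` pointwise as soon as they fix one point. Hence an involution stabilising `C` and fixing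
two points of `C` fixes `C` pointwise.

Now let `τ ≠ 1` be an involution of `G_B`. It fixes two points, hence a block `E` through them,
hence `E` pointwise. A point `y` moved by `τ` lies on a `τ`-invariant block `F` through `y` and
`τ y`; the `λ ≥ 2` points of `E ∩ F` are fixed by `τ`, so `τ` fixes `F` pointwise, and `y` too.
-/

open scoped Finset

theorem Finset.exists_fixed_of_involutive_of_odd_card {α : Type*} {s : Finset α} {f : α → α}
    (hmaps : ∀ a ∈ s, f a ∈ s) (hinv : ∀ a ∈ s, f (f a) = a) (hodd : Odd s.card) :
    ∃ a ∈ s, f a = a := by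
  by_contra! hfree
  have hsum : ∑ _a ∈ s, (1 : ZMod 2) = 0 :=
    Finset.sum_involution (fun a _ => f a) (fun _ _ => rfl) (fun a ha _ => hfree a ha) hmaps hinv
  rw [Finset.sum_const, nsmul_one, ZMod.natCast_eq_zero_iff_even] at hsum
  exact Nat.not_even_iff_odd.2 hodd hsum

namespace Equiv.Perm

variable {α : Type*} {g : Equiv.Perm α}

theorem apply_apply_of_mul_self_eq_one (hg2 : g * g = 1) (x : α) : g (g x) = x := by
  rw [← mul_apply, hg2, one_apply]

theorem smul_pair_of_apply_eq [DecidableEq α] {x y : α} (hx : g x = x) (hy : g y = y) :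
    g • ({x, y} : Finset α) = {x, y} := by
  rw [Finset.smul_finset_insert, Finset.smul_finset_singleton, Equiv.Perm.smul_def,
    Equiv.Perm.smul_def, hx, hy]

theorem smul_pair_apply [DecidableEq α] (hg2 : g * g = 1) (x : α) :
    g • ({x, g x} : Finset α) = {x, g x} := by
  rw [Finset.smul_finset_insert, Finset.smul_finset_singleton, Equiv.Perm.smul_def,
    Equiv.Perm.smul_def, apply_apply_of_mul_self_eq_one hg2, Finset.pair_comm]

end Equiv.Perm

namespace DihedralGroup

variable {n : ℕ}

theorem r_mem_of_r_add_self_mem {K : Subgroup (DihedralGroup n)} {s t : ZMod n}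
    (hodd : r (s + s + 1) ∈ K) (heven : r (t + t) ∈ K) : r t ∈ K := by
  obtain ⟨a, ha⟩ := ZMod.intCast_surjective s
  obtain ⟨b, hb⟩ := ZMod.intCast_surjective t
  -- `t = (2s + 1) t - 2t s`
  have hcomb : r t = r (s + s + 1) ^ b * r (t + t) ^ (-a) := by
    rw [r_zpow, r_zpow, r_mul_r, ← ha, ← hb]
    push_cast
    ring_nf
  rw [hcomb]
  exact K.mul_mem (K.zpow_mem hodd _) (K.zpow_mem heven _)

theorem commute_r_of_add_self_eq_zero {t : ZMod n} (ht : t + t = 0) (u : DihedralGroup n) :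
    Commute (r t) u := by
  cases u with
  | r i => rw [Commute, SemiconjBy, r_mul_r, r_mul_r, add_comm]
  | sr i =>
    rw [Commute, SemiconjBy, r_mul_sr, sr_mul_r, sub_eq_add_neg, neg_eq_of_add_eq_zero_left ht]

theorem exists_sr_mul_conj_sr_add_one (g : DihedralGroup n) (a : ZMod n) :
    ∃ s, sr a * (g⁻¹ * sr (a + 1) * g) = r (s + s + 1) := by
  cases g with
  | r t => exact ⟨t, by simp only [inv_r, r_mul_sr, sr_mul_r, sr_mul_sr]; ring_nf⟩
  | sr t => exact ⟨t - a - 1, by simp only [inv_sr, sr_mul_sr, r_mul_sr, sr_mul_sr]; ring_nf⟩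

theorem exists_sr_mul_conj_sr (g : DihedralGroup n) (a : ZMod n) :
    ∃ s, sr a * (g⁻¹ * sr a * g) = r (s + s) ∧ (g = r s ∨ g = sr a * r s) := by
  cases g with
  | r t => exact ⟨t, by simp only [inv_r, r_mul_sr, sr_mul_r, sr_mul_sr]; ring_nf, Or.inl rfl⟩
  | sr t =>
    refine ⟨t - a, by simp only [inv_sr, sr_mul_sr, r_mul_sr, sr_mul_sr]; ring_nf, Or.inr ?_⟩
    rw [sr_mul_r, add_sub_cancel]

theorem eq_of_sr_apply_eq {α : Type*} (π : DihedralGroup n →* Equiv.Perm α) {D : Set α}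
    (htrans : ∀ x ∈ D, ∀ y ∈ D, ∃ g, π g x = y) (hfix : ∀ c, ∃ z ∈ D, π (sr c) z = z)
    {a : ZMod n} {x y : α} (hx : x ∈ D) (hy : y ∈ D) (hax : π (sr a) x = x)
    (hay : π (sr a) y = y) : x = y := by
  let K := (MulAction.stabilizer (Equiv.Perm α) x).comap π
  have hconj : ∀ g h z, π g x = z → π h z = z → g⁻¹ * h * g ∈ K := by
    intro g h z hgz hhz
    change π (g⁻¹ * h * g) x = x
    rw [map_mul, map_mul, map_inv, Equiv.Perm.mul_apply, Equiv.Perm.mul_apply, hgz, hhz]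
    exact Equiv.Perm.inv_eq_iff_eq.2 hgz.symm
  have hsr : sr a ∈ K := hax
  -- `K` contains `sr a` and a conjugate of `sr (a + 1)`, hence an odd rotation.
  obtain ⟨s, hs⟩ : ∃ s, r (s + s + 1) ∈ K := by
    obtain ⟨z, hz, hfz⟩ := hfix (a + 1)
    obtain ⟨g, hgz⟩ := htrans x hx z hz
    obtain ⟨s, hs⟩ := exists_sr_mul_conj_sr_add_one g a
    exact ⟨s, hs ▸ K.mul_mem hsr (hconj g _ z hgz hfz)⟩
  obtain ⟨g, hgy⟩ := htrans x hx y hy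
  obtain ⟨t, ht, hg⟩ := exists_sr_mul_conj_sr g a
  have hrt : r t ∈ K := r_mem_of_r_add_self_mem hs (ht ▸ K.mul_mem hsr (hconj g _ y hgy hay))
  have hgK : g ∈ K := by
    rcases hg with rfl | rfl
    exacts [hrt, K.mul_mem hsr hrt]
  rw [← hgy]
  exact (hgK : π g x = x).symm

end DihedralGroup

theorem Subgroup.exists_mul_self_eq_one_ne_one_of_mulEquiv_dihedralGroup {M : Type*} [Group M]
    {G : Subgroup M} {H : Subgroup G} {n : ℕ} (ψ : H ≃* DihedralGroup n) :
    ∃ τ ∈ G, τ * τ = 1 ∧ τ ≠ 1 := by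
  refine ⟨ψ.symm (DihedralGroup.sr 0), (ψ.symm (DihedralGroup.sr 0) : G).2, ?_, fun h => ?_⟩
  · rw [← Subgroup.coe_mul, ← Subgroup.coe_mul, ← map_mul, DihedralGroup.sr_mul_self, map_one]
    rfl
  · have := ψ.symm.map_eq_one_iff.1 (Subtype.ext (Subtype.ext h))
    rw [DihedralGroup.one_def] at this
    cases this

section

variable {𝓑 : Finset (Finset P)} {G : Subgroup (Equiv.Perm P)}

omit [Fintype P] in
theorem IsFlagTransitive.isBlockTransitive (hflag : IsFlagTransitive G 𝓑)
    (hne : ∀ C ∈ 𝓑, C.Nonempty) : IsBlockTransitive G 𝓑 := by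
  intro B₁ h₁ B₂ h₂
  obtain ⟨x₁, hx₁⟩ := hne B₁ h₁
  obtain ⟨x₂, hx₂⟩ := hne B₂ h₂
  obtain ⟨g, hg, -, hgB⟩ := hflag B₁ h₁ B₂ h₂ x₁ hx₁ x₂ hx₂
  exact ⟨g, hg, hgB⟩

omit [Fintype P] in
theorem IsBlockTransitive.nonempty_stabilizer_mulEquiv (hbt : IsBlockTransitive G 𝓑)
    {B₁ B₂ : Finset P} (h₁ : B₁ ∈ 𝓑) (h₂ : B₂ ∈ 𝓑) :
    Nonempty (MulAction.stabilizer G B₁ ≃* MulAction.stabilizer G B₂) := by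
  obtain ⟨g, hg, hgB⟩ := hbt B₂ h₂ B₁ h₁
  exact ⟨MulAction.stabilizerEquivStabilizerOfOrbitRel ⟨⟨g, hg⟩, hgB⟩⟩

end

namespace IsDesign

variable {𝓑 : Finset (Finset P)} {G : Subgroup (Equiv.Perm P)} {v k lam n : ℕ}
  {g : Equiv.Perm P}

theorem card_filter_mem_mul (hD : IsDesign 𝓑 v k lam) (x : P) :
    #{C ∈ 𝓑 | x ∈ C} * (k - 1) = (v - 1) * lam := by
  have hpairs : ∀ y ∈ Finset.univ.erase x, #{C ∈ {C ∈ 𝓑 | x ∈ C} | y ∈ C} = lam := by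
    intro y hy
    rw [Finset.filter_filter]
    exact hD.pair_blocks x y (Finset.ne_of_mem_erase hy).symm
  have hcount := Finset.sum_card_inter hpairs
  rw [Finset.card_erase_of_mem (Finset.mem_univ x), Finset.card_univ, hD.card_points] at hcount
  rw [← hcount, Finset.card_eq_sum_ones, Finset.sum_mul, one_mul]
  refine Finset.sum_congr rfl fun C hC => ?_
  rw [Finset.mem_filter] at hC
  rw [Finset.erase_inter, Finset.univ_inter,
    Finset.card_erase_of_mem hC.2, hD.blocks_card C hC.1]

theorem card_filter_mem (hD : IsDesign 𝓑 v k lam) (hsym : #𝓑 = v) (x : P) :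
    #{C ∈ 𝓑 | x ∈ C} = k := by
  have hk : 0 < k - 1 := by have := hD.two_lt_k; omega
  have hv : 0 < v := by have := hD.k_lt_v; omega
  have hreg : ∀ y, #{C ∈ 𝓑 | y ∈ C} = #{C ∈ 𝓑 | x ∈ C} := fun y =>
    Nat.eq_of_mul_eq_mul_right hk
      ((hD.card_filter_mem_mul y).trans (hD.card_filter_mem_mul x).symm)
  have hcount := Finset.sum_card hreg
  rw [Finset.sum_congr rfl hD.blocks_card, Finset.sum_const, smul_eq_mul, hsym,
    hD.card_points] at hcount
  exact (Nat.eq_of_mul_eq_mul_left hv hcount).symm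

theorem sub_one_mul_lam_eq (hD : IsDesign 𝓑 v k lam) (hsym : #𝓑 = v) :
    (v - 1) * lam = k * (k - 1) := by
  obtain ⟨x⟩ : Nonempty P := by
    rw [← Fintype.card_pos_iff, hD.card_points]; have := hD.k_lt_v; omega
  rw [← hD.card_filter_mem_mul x, hD.card_filter_mem hsym x]

theorem sum_card_inter_erase (hD : IsDesign 𝓑 v k lam) (hsym : #𝓑 = v) {B₀ : Finset P}
    (hB₀ : B₀ ∈ 𝓑) : ∑ C ∈ 𝓑.erase B₀, #(B₀ ∩ C) = k * (k - 1) := by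
  rw [Finset.sum_card_inter (n := k - 1), hD.blocks_card B₀ hB₀]
  intro x hx
  rw [Finset.filter_erase, Finset.card_erase_of_mem (Finset.mem_filter.2 ⟨hB₀, hx⟩),
    hD.card_filter_mem hsym x]

theorem sum_card_offDiag_inter_erase (hD : IsDesign 𝓑 v k lam) {B₀ : Finset P}
    (hB₀ : B₀ ∈ 𝓑) :
    ∑ C ∈ 𝓑.erase B₀, #(B₀ ∩ C).offDiag = #B₀.offDiag * (lam - 1) := by
  have hcount := Finset.sum_card_bipartiteAbove_eq_sum_card_bipartiteBelow
    (r := fun (C : Finset P) (p : P × P) => p ∈ C.offDiag) (s := 𝓑.erase B₀) (t := B₀.offDiag)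
  have habove : ∀ C,
      #(B₀.offDiag.bipartiteAbove (fun C p => p ∈ C.offDiag) C) = #(B₀ ∩ C).offDiag := by
    intro C
    rw [Finset.bipartiteAbove, Finset.filter_mem_eq_inter, Finset.offDiag_inter]
  have hbelow : ∀ p ∈ B₀.offDiag,
      #((𝓑.erase B₀).bipartiteBelow (fun C p => p ∈ C.offDiag) p) = lam - 1 := by
    intro p hp
    rw [Finset.mem_offDiag] at hp
    have hfilter : {C ∈ 𝓑 | p ∈ C.offDiag} = {C ∈ 𝓑 | p.1 ∈ C ∧ p.2 ∈ C} := by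
      refine Finset.filter_congr fun C _ => ?_
      rw [Finset.mem_offDiag, ← and_assoc]
      exact and_iff_left hp.2.2
    rw [Finset.bipartiteBelow, Finset.filter_erase, hfilter,
      Finset.card_erase_of_mem (Finset.mem_filter.2 ⟨hB₀, hp.1, hp.2.1⟩),
      hD.pair_blocks p.1 p.2 hp.2.2]
  rw [Finset.sum_congr rfl fun C _ => habove C, Finset.sum_congr rfl hbelow] at hcount
  rw [hcount, Finset.sum_const, smul_eq_mul]

theorem card_inter_eq (hD : IsDesign 𝓑 v k lam) (hsym : #𝓑 = v) {B₀ C₀ : Finset P}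
    (hB₀ : B₀ ∈ 𝓑) (hC₀ : C₀ ∈ 𝓑) (hne : C₀ ≠ B₀) : #(B₀ ∩ C₀) = lam := by
  have hk := hD.two_lt_k
  have hv := hD.k_lt_v
  have hlam := hD.lam_pos
  -- The sizes `#(B₀ ∩ C)`, `C ≠ B₀`, have mean `λ` and variance `0`.
  let m : Finset P → ℤ := fun C => #(B₀ ∩ C)
  have hsum : ∑ C ∈ 𝓑.erase B₀, m C = k * (k - 1) := by
    have := congrArg (Nat.cast : ℕ → ℤ) (hD.sum_card_inter_erase hsym hB₀)
    push_cast [Nat.cast_sub (by omega : 1 ≤ k)] at this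
    exact this
  have hsum_sq : ∑ C ∈ 𝓑.erase B₀, (m C * m C - m C) = (k * k - k) * (lam - 1) := by
    have := congrArg (Nat.cast : ℕ → ℤ) (hD.sum_card_offDiag_inter_erase hB₀)
    push_cast [Finset.offDiag_card, Nat.cast_sub (Nat.le_mul_self _), hD.blocks_card B₀ hB₀,
      Nat.cast_sub hlam] at this
    exact this
  have hcard : ((𝓑.erase B₀).card : ℤ) = v - 1 := by
    rw [Finset.card_erase_of_mem hB₀, hsym, Nat.cast_sub (by omega)]
    rfl
  have hparam : ((v : ℤ) - 1) * lam = k * (k - 1) := by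
    have := congrArg (Nat.cast : ℕ → ℤ) (hD.sub_one_mul_lam_eq hsym)
    push_cast [Nat.cast_sub (by omega : 1 ≤ v), Nat.cast_sub (by omega : 1 ≤ k)] at this
    exact this
  have hvar : ∑ C ∈ 𝓑.erase B₀, (m C - lam) ^ 2 = 0 := by
    calc ∑ C ∈ 𝓑.erase B₀, (m C - lam) ^ 2
        = ∑ C ∈ 𝓑.erase B₀, (m C * m C - m C) - (2 * lam - 1) * ∑ C ∈ 𝓑.erase B₀, m C
          + ((𝓑.erase B₀).card : ℤ) * lam ^ 2 := by
          rw [Finset.mul_sum, ← Finset.sum_sub_distrib, ← nsmul_eq_mul, ← Finset.sum_const,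
            ← Finset.sum_add_distrib]
          exact Finset.sum_congr rfl fun C _ => by ring
      _ = 0 := by rw [hsum, hsum_sq, hcard]; linear_combination lam * hparam
  have hC₀ : (#(B₀ ∩ C₀) : ℤ) = lam := by
    have := (Finset.sum_eq_zero_iff_of_nonneg fun C _ => sq_nonneg (m C - lam)).1 hvar C₀
      (Finset.mem_erase.2 ⟨hne, hC₀⟩)
    exact sub_eq_zero.1 (pow_eq_zero_iff two_ne_zero |>.1 this)
  exact_mod_cast hC₀

theorem exists_smul_eq_of_smul_pair (hD : IsDesign 𝓑 v k lam) (hodd : Odd lam)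
    (hg : ∀ C ∈ 𝓑, g • C ∈ 𝓑) (hg2 : g * g = 1) {x y : P} (hxy : x ≠ y)
    (hpair : g • ({x, y} : Finset P) = {x, y}) : ∃ C ∈ 𝓑, x ∈ C ∧ y ∈ C ∧ g • C = C := by
  have hmaps : ∀ C ∈ {C ∈ 𝓑 | x ∈ C ∧ y ∈ C}, g • C ∈ {C ∈ 𝓑 | x ∈ C ∧ y ∈ C} := by
    intro C hC
    rw [Finset.mem_filter] at hC ⊢
    have hsub : ({x, y} : Finset P) ⊆ C := by
      simpa only [Finset.insert_subset_iff, Finset.singleton_subset_iff] using hC.2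
    have hgsub : ({x, y} : Finset P) ⊆ g • C :=
      hpair ▸ Finset.smul_finset_subset_smul_finset hsub
    simpa only [Finset.insert_subset_iff, Finset.singleton_subset_iff, hg C hC.1, true_and]
      using hgsub
  obtain ⟨C, hC, hgC⟩ := Finset.exists_fixed_of_involutive_of_odd_card hmaps
    (fun C _ => by rw [smul_smul, hg2, one_smul]) (by rwa [hD.pair_blocks x y hxy])
  rw [Finset.mem_filter] at hC
  exact ⟨C, hC.1, hC.2.1, hC.2.2, hgC⟩

theorem exists_fixed_mem_inter (hD : IsDesign 𝓑 v k lam) (hsym : #𝓑 = v) (hodd : Odd lam)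
    (hg2 : g * g = 1) {C₁ C₂ : Finset P} (h₁ : C₁ ∈ 𝓑) (h₂ : C₂ ∈ 𝓑) (hne : C₁ ≠ C₂)
    (hg₁₂ : g • (C₁ ∩ C₂) = C₁ ∩ C₂) : ∃ x ∈ C₁ ∩ C₂, g x = x :=
  Finset.exists_fixed_of_involutive_of_odd_card
    (fun _ hx => hg₁₂ ▸ Finset.smul_mem_smul_finset hx)
    (fun x _ => g.apply_apply_of_mul_self_eq_one hg2 x)
    (by rwa [hD.card_inter_eq hsym h₁ h₂ hne.symm])

theorem exists_fixed_mem_of_smul_eq (hD : IsDesign 𝓑 v k lam) (hsym : #𝓑 = v)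
    (hodd : Odd lam) (hg : ∀ C ∈ 𝓑, g • C ∈ 𝓑) (hg2 : g * g = 1) {C : Finset P}
    (hC : C ∈ 𝓑) (hgC : g • C = C) : ∃ x ∈ C, g x = x := by
  by_contra! hfree
  -- Then `C` is the only `g`-invariant block, it contains every point moved by `g`, and `g` has
  -- at most one fixed point; so `v ≤ k + 1`.
  have hunique : ∀ E ∈ 𝓑, g • E = E → E = C := by
    intro E hE hgE
    by_contra hne
    obtain ⟨x, hx, hgx⟩ := hD.exists_fixed_mem_inter hsym hodd hg2 hC hE (Ne.symm hne)
      (by rw [Finset.smul_finset_inter, hgC, hgE])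
    exact hfree x (Finset.mem_inter.1 hx).1 hgx
  have hmoved : ∀ x, g x ≠ x → x ∈ C := by
    intro x hx
    obtain ⟨E, hE, hxE, -, hgE⟩ :=
      hD.exists_smul_eq_of_smul_pair hodd hg hg2 hx.symm (g.smul_pair_apply hg2 x)
    exact hunique E hE hgE ▸ hxE
  have hfixed : #{x | g x = x} ≤ 1 := by
    refine Finset.card_le_one.2 fun x hx y hy => ?_
    rw [Finset.mem_filter] at hx hy
    by_contra hxy
    obtain ⟨E, hE, hxE, -, hgE⟩ :=
      hD.exists_smul_eq_of_smul_pair hodd hg hg2 hxy (g.smul_pair_of_apply_eq hx.2 hy.2)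
    exact hfree x (hunique E hE hgE ▸ hxE) hx.2
  have hcover : Finset.univ ⊆ C ∪ ({x | g x = x} : Finset P) := by
    intro x _
    rw [Finset.mem_union, Finset.mem_filter]
    by_cases hx : g x = x
    · exact Or.inr ⟨Finset.mem_univ x, hx⟩
    · exact Or.inl (hmoved x hx)
  have := (Finset.card_le_card hcover).trans (Finset.card_union_le _ _)
  rw [Finset.card_univ, hD.card_points, hD.blocks_card C hC] at this
  have := hD.k_lt_v
  omega

theorem exists_fixed_mem (hD : IsDesign 𝓑 v k lam) (hsym : #𝓑 = v) (hodd : Odd lam)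
    (hg : ∀ C ∈ 𝓑, g • C ∈ 𝓑) (hg2 : g * g = 1) {C : Finset P} (hC : C ∈ 𝓑) :
    ∃ x ∈ C, g x = x := by
  by_cases hgC : g • C = C
  · exact hD.exists_fixed_mem_of_smul_eq hsym hodd hg hg2 hC hgC
  · obtain ⟨x, hx, hgx⟩ := hD.exists_fixed_mem_inter hsym hodd hg2 hC (hg C hC) (Ne.symm hgC)
      (by rw [Finset.smul_finset_inter, smul_smul, hg2, one_smul, Finset.inter_comm])
    exact ⟨x, (Finset.mem_inter.1 hx).1, hgx⟩

theorem exists_fixed_ne (hD : IsDesign 𝓑 v k lam) (hsym : #𝓑 = v) (hodd : Odd lam)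
    (hg : ∀ C ∈ 𝓑, g • C ∈ 𝓑) (hg2 : g * g = 1) (x : P) :
    ∃ y ≠ x, g y = y := by
  by_contra! honly
  have hall : {C ∈ 𝓑 | x ∈ C} = 𝓑 := by
    refine Finset.filter_true_of_mem fun C hC => ?_
    obtain ⟨y, hy, hgy⟩ := hD.exists_fixed_mem hsym hodd hg hg2 hC
    by_contra hxC
    exact honly y (fun h => hxC (h ▸ hy)) hgy
  have := hD.card_filter_mem hsym x
  rw [hall, hsym] at this
  have := hD.k_lt_v
  omega

theorem apply_eq_self_of_two_fixed (hD : IsDesign 𝓑 v k lam) (hsym : #𝓑 = v) (hodd : Odd lam)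
    (hAut : IsAutGroup G 𝓑) (hflag : IsFlagTransitive G 𝓑) {C : Finset P} (hC : C ∈ 𝓑)
    (ψ : MulAction.stabilizer G C ≃* DihedralGroup n) (hg : g ∈ G) (hg2 : g * g = 1)
    (hgC : g • C = C) {x y : P} (hx : x ∈ C) (hy : y ∈ C) (hxy : x ≠ y) (hgx : g x = x)
    (hgy : g y = y) : ∀ z ∈ C, g z = z := by
  let π : DihedralGroup n →* Equiv.Perm P :=
    G.subtype.comp ((MulAction.stabilizer G C).subtype.comp ψ.symm.toMonoidHom)
  have hπ : ∀ h (hh : h ∈ G) (hhC : h • C = C), π (ψ ⟨⟨h, hh⟩, hhC⟩) = h := by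
    intro h hh hhC
    simp [π]
  have htrans : ∀ x ∈ (C : Set P), ∀ y ∈ (C : Set P), ∃ u, π u x = y := by
    intro x hx y hy
    obtain ⟨h, hh, hhx, hhC⟩ := hflag C hC C hC x hx y hy
    exact ⟨_, (hπ h hh hhC).symm ▸ hhx⟩
  have hπG : ∀ u, π u ∈ G := fun u => (ψ.symm u : G).2
  have hfix : ∀ c, ∃ z ∈ (C : Set P), π (DihedralGroup.sr c) z = z := fun c =>
    hD.exists_fixed_mem hsym hodd (hAut _ (hπG _))
      (by rw [← map_mul, DihedralGroup.sr_mul_self, map_one]) hC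
  have hu := hπ g hg hgC
  rcases hψg : ψ ⟨⟨g, hg⟩, hgC⟩ with t | a
  · rw [hψg] at hu
    have ht : t + t = 0 := by
      refine DihedralGroup.r.inj (Eq.trans ?_ DihedralGroup.one_def)
      rw [← DihedralGroup.r_mul_r, ← hψg, ← map_mul, ← map_one ψ]
      exact congrArg ψ (Subtype.ext (Subtype.ext hg2))
    intro z hz
    obtain ⟨u, rfl⟩ := htrans x hx z hz
    have hcomm := (DihedralGroup.commute_r_of_add_self_eq_zero ht u).eq
    rw [← hu, ← Equiv.Perm.mul_apply, ← map_mul, hcomm, map_mul, Equiv.Perm.mul_apply, hu, hgx]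
  · rw [hψg] at hu
    exact absurd (DihedralGroup.eq_of_sr_apply_eq π htrans hfix hx hy (hu ▸ hgx) (hu ▸ hgy)) hxy

end IsDesign

theorem stmt_18_general (𝓑 : Finset (Finset P)) (v k lam n : ℕ)
    (hD : IsDesign 𝓑 v k lam) (hsym : 𝓑.card = v) (hlam : 1 < lam)
    (G : Subgroup (Equiv.Perm P)) (hAut : IsAutGroup G 𝓑)
    (hflag : IsFlagTransitive G 𝓑)
    (B : Finset P) (hB : B ∈ 𝓑)
    (hdih : Nonempty (MulAction.stabilizer G B ≃* DihedralGroup n)) :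
    Even lam := by
  by_contra heven
  have hodd : Odd lam := Nat.not_even_iff_odd.1 heven
  have hbt : IsBlockTransitive G 𝓑 := hflag.isBlockTransitive fun C hC =>
    Finset.card_pos.1 (by rw [hD.blocks_card C hC]; have := hD.two_lt_k; omega)
  have hψ : ∀ C ∈ 𝓑, Nonempty (MulAction.stabilizer G C ≃* DihedralGroup n) := fun C hC =>
    ⟨(hbt.nonempty_stabilizer_mulEquiv hC hB).some.trans hdih.some⟩
  obtain ⟨τ, hτG, hτ2, hτ1⟩ :=
    Subgroup.exists_mul_self_eq_one_ne_one_of_mulEquiv_dihedralGroup hdih.some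
  have hτ : ∀ C ∈ 𝓑, τ • C ∈ 𝓑 := hAut τ hτG
  have hfixes : ∀ C ∈ 𝓑, τ • C = C → ∀ x ∈ C, ∀ y ∈ C, x ≠ y → τ x = x → τ y = y →
      ∀ z ∈ C, τ z = z := fun C hC hτC _ hx _ hy hxy =>
    hD.apply_eq_self_of_two_fixed hsym hodd hAut hflag hC (hψ C hC).some hτG hτ2 hτC hx hy hxy
  obtain ⟨x₀, -, hx₀⟩ := hD.exists_fixed_mem hsym hodd hτ hτ2 hB
  obtain ⟨x₁, hne, hx₁⟩ := hD.exists_fixed_ne hsym hodd hτ hτ2 x₀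
  obtain ⟨E, hE, hx₀E, hx₁E, hτE⟩ :=
    hD.exists_smul_eq_of_smul_pair hodd hτ hτ2 hne.symm (τ.smul_pair_of_apply_eq hx₀ hx₁)
  have hτE' := hfixes E hE hτE x₀ hx₀E x₁ hx₁E hne.symm hx₀ hx₁
  obtain ⟨y, hy⟩ : ∃ y, τ y ≠ y := by
    by_contra! h
    exact hτ1 (Equiv.ext h)
  obtain ⟨F, hF, hyF, -, hτF⟩ :=
    hD.exists_smul_eq_of_smul_pair hodd hτ hτ2 hy.symm (τ.smul_pair_apply hτ2 y)
  have hFE : F ≠ E := fun h => hy (hτE' y (h ▸ hyF))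
  obtain ⟨p, hp, q, hq, hpq⟩ := Finset.one_lt_card.1 (hD.card_inter_eq hsym hE hF hFE ▸ hlam)
  rw [Finset.mem_inter] at hp hq
  exact hy (hfixes F hF hτF p hp.2 q hq.2 hpq (hτE' p hp.1) (hτE' q hq.1) y hyF)

/-- **Lemma 6.6.** Let `G` be a flag-transitive automorphism group of a symmetric design
with `λ > 1`. If `G_B ≅ D_{2n}` with `n ≥ 3`, then `λ` is even. -/
theorem stmt_18 (𝓑 : Finset (Finset P)) (v k lam n : ℕ)
    (hD : IsDesign 𝓑 v k lam) (hsym : 𝓑.card = v) (hlam : 1 < lam)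
    (G : Subgroup (Equiv.Perm P)) (hAut : IsAutGroup G 𝓑)
    (hflag : IsFlagTransitive G 𝓑) (hn : 3 ≤ n)
    (B : Finset P) (hB : B ∈ 𝓑)
    (hdih : Nonempty (MulAction.stabilizer G B ≃* DihedralGroup n)) :
    Even lam :=
  stmt_18_general 𝓑 v k lam n hD hsym hlam G hAut hflag B hB hdih
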